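/- arXiv:1109.0101 — 2 statements merged into one kernel-verified Lean document; each statement's English description precedes it below -/
import Mathlib

section
/- Fix n ≥ 1 and θ > 0 with 0 ≤ γ ≤ θ. Take V = 1 (so ρ(x) = 1 and Ψ_θ(B(x₀,r)) = (1+r)^θ). Then the weight w(x) = (1+|x|)^{-(n+γ)} on ℝⁿ belongs to A_1^{ρ,θ}: there is a constant C such that for every ball B, (1+r)^{-θ}|B|^{-1}∫_B (1+|y|)^{-(n+γ)} dy ≤ C (1+|x|)^{-(n+γ)} for a.e. x ∈ B. -/
open MeasureTheory Metric Module

/-!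
Write `d` for the dimension, `p = d + γ` and `w y = (1 + ‖y‖)^(-p)`. If the ball `B(x₀, r)` is
small (`r ≤ 1`) or far from the origin (`2r ≤ ‖x₀‖`), then `1 + ‖y‖` is comparable on `B` up to a
factor `3`, so the average of `w` over `B` is at most `3^p w x`, and `(1 + r)^(-θ) ≤ 1`.
Otherwise `1 + ‖y‖ ≤ 4r` on `B`, so `w ≤ (4r)^(θ - γ) (1 + ‖y‖)^(-(d + θ))` there; the latter
function is integrable because `θ > 0`, hence `∫_B w ≲ r^(θ - γ)`, and dividing by
`(1 + r)^θ |B| ≳ r^(θ + d)` leaves `r^(-p) ≲ w x`.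
-/

section Geometry

variable {E : Type*} [SeminormedAddCommGroup E] {x₀ x y : E} {r : ℝ}

lemma one_add_norm_le_three_mul_of_mem_ball (hx : x ∈ ball x₀ r) (hy : y ∈ ball x₀ r)
    (h : r ≤ 1 ∨ 2 * r ≤ ‖x₀‖) : 1 + ‖x‖ ≤ 3 * (1 + ‖y‖) := by
  have hx' : ‖x‖ - ‖x₀‖ < r := (norm_sub_norm_le x x₀).trans_lt (mem_ball_iff_norm.1 hx)
  have hy' : ‖x₀‖ - ‖y‖ < r := (norm_sub_norm_le x₀ y).trans_lt (mem_ball_iff_norm'.1 hy)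
  rcases h with h | h <;> linarith [norm_nonneg y]

lemma one_add_norm_le_four_mul_of_mem_ball (hy : y ∈ ball x₀ r) (hr : 1 ≤ r)
    (h : ‖x₀‖ ≤ 2 * r) : 1 + ‖y‖ ≤ 4 * r := by
  have hy' : ‖y‖ - ‖x₀‖ < r := (norm_sub_norm_le y x₀).trans_lt (mem_ball_iff_norm.1 hy)
  linarith

end Geometry

lemma Real.rpow_neg_le_mul_rpow_neg {a b K p : ℝ} (hp : 0 ≤ p) (hb : 0 < b) (hK : 0 < K)
    (h : b ≤ K * a) : a ^ (-p) ≤ K ^ p * b ^ (-p) := by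
  have ha : 0 ≤ a := nonneg_of_mul_nonneg_right (hb.le.trans h) hK
  calc a ^ (-p) = K ^ p * (K * a) ^ (-p) := by
        rw [Real.mul_rpow hK.le ha, ← mul_assoc, ← Real.rpow_add hK, add_neg_cancel,
          Real.rpow_zero, one_mul]
    _ ≤ K ^ p * b ^ (-p) := mul_le_mul_of_nonneg_left
        (Real.rpow_le_rpow_of_nonpos hb h (neg_nonpos.2 hp)) (by positivity)

lemma inv_one_add_rpow_mul_inv_pow_mul_rpow_le {r θ γ : ℝ} (d : ℕ) (hr : 0 < r) (hθ : 0 ≤ θ) :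
    ((1 + r) ^ θ)⁻¹ * (r ^ d)⁻¹ * (4 * r) ^ (θ - γ) ≤ 4 ^ (d + θ) * (4 * r) ^ (-(d + γ)) := by
  have hsplit : (4 * r) ^ (θ - γ) = 4 ^ (d + θ) * (r ^ d * r ^ θ) * (4 * r) ^ (-(d + γ)) := by
    rw [← Real.rpow_natCast r d, ← Real.rpow_add hr, ← Real.mul_rpow (by norm_num) hr.le,
      ← Real.rpow_add (by positivity)]
    ring_nf
  have hrθ : r ^ θ ≤ (1 + r) ^ θ := Real.rpow_le_rpow hr.le (by linarith) hθ
  rw [hsplit]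
  calc ((1 + r) ^ θ)⁻¹ * (r ^ d)⁻¹ * (4 ^ (d + θ) * (r ^ d * r ^ θ) * (4 * r) ^ (-(d + γ)))
      = (r ^ θ / (1 + r) ^ θ) * (4 ^ (d + θ) * (4 * r) ^ (-(d + γ))) := by
        field_simp
    _ ≤ 1 * (4 ^ (d + θ) * (4 * r) ^ (-(d + γ))) := by
        gcongr
        exact div_le_one_of_le₀ hrθ (by positivity)
    _ = _ := one_mul _

lemma inv_toReal_mul_setIntegral_le {α : Type*} [MeasurableSpace α] {μ : Measure α} {s : Set α}
    {f : α → ℝ} {c : ℝ} (hs : MeasurableSet s) (hμ : μ s ≠ ⊤) (hf : IntegrableOn f s μ)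
    (hfc : ∀ y ∈ s, f y ≤ c) (hc : 0 ≤ c) : (μ s).toReal⁻¹ * ∫ y in s, f y ∂μ ≤ c := by
  have hint : ∫ y in s, f y ∂μ ≤ (μ s).toReal * c := by
    calc ∫ y in s, f y ∂μ ≤ ∫ _ in s, c ∂μ := setIntegral_mono_on hf (integrableOn_const hμ) hs hfc
      _ = (μ s).toReal * c := by rw [setIntegral_const, smul_eq_mul, measureReal_def]
  rcases ENNReal.toReal_nonneg.eq_or_lt with h0 | hpos
  · rw [← h0, inv_zero, zero_mul]
    exact hc
  · exact (inv_mul_le_iff₀ hpos).2 hint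

/-- `Ψ_θ(B)⁻¹ |B|⁻¹ ∫_B f` for `B = ball x₀ r` and `ρ ≡ 1`, i.e. `Ψ_θ(B) = (1 + r)^θ`. -/
noncomputable def scaledBallAverage {E : Type*} [PseudoMetricSpace E] [MeasurableSpace E]
    (μ : Measure E) (θ : ℝ) (f : E → ℝ) (x₀ : E) (r : ℝ) : ℝ :=
  ((1 + r) ^ θ)⁻¹ * (μ (ball x₀ r)).toReal⁻¹ * ∫ y in ball x₀ r, f y ∂μ

section Weight

variable {E : Type*} [NormedAddCommGroup E] [MeasurableSpace E] [BorelSpace E] [ProperSpace E]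
  (μ : Measure E) [IsFiniteMeasureOnCompacts μ] {x₀ x : E} {r θ : ℝ}

lemma integrableOn_ball_one_add_norm_rpow (q : ℝ) :
    IntegrableOn (fun y : E => (1 + ‖y‖) ^ q) (ball x₀ r) μ := by
  have hcont : Continuous fun y : E => (1 + ‖y‖) ^ q :=
    (continuous_const.add continuous_norm).rpow_const fun y =>
      Or.inl (by positivity : (0 : ℝ) < 1 + ‖y‖).ne'
  exact (hcont.continuousOn.integrableOn_compact (isCompact_closedBall x₀ r)).mono_set
    ball_subset_closedBall

lemma scaledBallAverage_le_of_small_or_far {p : ℝ} (hθ : 0 ≤ θ) (hp : 0 ≤ p)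
    (hx : x ∈ ball x₀ r) (h : r ≤ 1 ∨ 2 * r ≤ ‖x₀‖) :
    scaledBallAverage μ θ (fun y => (1 + ‖y‖) ^ (-p)) x₀ r ≤ 3 ^ p * (1 + ‖x‖) ^ (-p) := by
  have hr : 0 < r := pos_of_mem_ball hx
  have hΨ : ((1 + r) ^ θ)⁻¹ ≤ 1 :=
    inv_le_one_of_one_le₀ (Real.one_le_rpow (by linarith) hθ)
  have havg : (μ (ball x₀ r)).toReal⁻¹ * ∫ y in ball x₀ r, (1 + ‖y‖) ^ (-p) ∂μ
      ≤ 3 ^ p * (1 + ‖x‖) ^ (-p) :=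
    inv_toReal_mul_setIntegral_le measurableSet_ball measure_ball_lt_top.ne
      (integrableOn_ball_one_add_norm_rpow μ _)
      (fun y hy => Real.rpow_neg_le_mul_rpow_neg hp (by positivity) (by norm_num)
        (one_add_norm_le_three_mul_of_mem_ball hx hy h))
      (by positivity)
  unfold scaledBallAverage
  rw [mul_assoc]
  exact (mul_le_of_le_one_left (by positivity) hΨ).trans havg

end Weight

section HaarWeight

variable {E : Type*} [NormedAddCommGroup E] [NormedSpace ℝ E] [FiniteDimensional ℝ E]
  [MeasurableSpace E] [BorelSpace E] (μ : Measure E) [μ.IsAddHaarMeasure] {x₀ x : E} {r θ : ℝ}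

lemma setIntegral_one_add_norm_rpow_neg_le {s : Set E} {R γ : ℝ} (hs : MeasurableSet s)
    (hθ : 0 < θ) (hγθ : γ ≤ θ) (hR₀ : 0 ≤ R) (hR : ∀ y ∈ s, 1 + ‖y‖ ≤ R) :
    ∫ y in s, (1 + ‖y‖) ^ (-(finrank ℝ E + γ)) ∂μ
      ≤ R ^ (θ - γ) * ∫ y, (1 + ‖y‖) ^ (-(finrank ℝ E + θ)) ∂μ := by
  have hint : Integrable (fun y : E => (1 + ‖y‖) ^ (-(finrank ℝ E + θ))) μ :=
    integrable_one_add_norm (by linarith)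
  have hpt : ∀ y ∈ s, (1 + ‖y‖) ^ (-(finrank ℝ E + γ))
      ≤ R ^ (θ - γ) * (1 + ‖y‖) ^ (-(finrank ℝ E + θ)) := by
    intro y hy
    have hsplit : (1 + ‖y‖) ^ (-(finrank ℝ E + γ))
        = (1 + ‖y‖) ^ (θ - γ) * (1 + ‖y‖) ^ (-(finrank ℝ E + θ)) := by
      rw [← Real.rpow_add (by positivity)]
      ring_nf
    rw [hsplit]
    exact mul_le_mul_of_nonneg_right
      (Real.rpow_le_rpow (by positivity) (hR y hy) (sub_nonneg.2 hγθ)) (by positivity)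
  calc ∫ y in s, (1 + ‖y‖) ^ (-(finrank ℝ E + γ)) ∂μ
      ≤ ∫ y in s, R ^ (θ - γ) * (1 + ‖y‖) ^ (-(finrank ℝ E + θ)) ∂μ :=
        integral_mono_of_nonneg (Filter.Eventually.of_forall fun y => by positivity)
          (hint.const_mul _).integrableOn
          ((ae_restrict_mem hs).mono hpt)
    _ = R ^ (θ - γ) * ∫ y in s, (1 + ‖y‖) ^ (-(finrank ℝ E + θ)) ∂μ := integral_const_mul _ _
    _ ≤ R ^ (θ - γ) * ∫ y, (1 + ‖y‖) ^ (-(finrank ℝ E + θ)) ∂μ :=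
        mul_le_mul_of_nonneg_left
          (setIntegral_le_integral hint (Filter.Eventually.of_forall fun y => by positivity))
          (by positivity)

lemma scaledBallAverage_le_of_large {γ : ℝ} (hθ : 0 < θ) (hγ : 0 ≤ γ) (hγθ : γ ≤ θ)
    (hx : x ∈ ball x₀ r) (hr : 1 ≤ r) (hx₀ : ‖x₀‖ ≤ 2 * r) :
    scaledBallAverage μ θ (fun y => (1 + ‖y‖) ^ (-(finrank ℝ E + γ))) x₀ r
      ≤ 4 ^ (finrank ℝ E + θ) * ((∫ y, (1 + ‖y‖) ^ (-(finrank ℝ E + θ)) ∂μ)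
          / (μ (ball 0 1)).toReal) * (1 + ‖x‖) ^ (-(finrank ℝ E + γ)) := by
  set d := finrank ℝ E
  set I := ∫ y, (1 + ‖y‖) ^ (-(d + θ)) ∂μ
  set ω := (μ (ball (0 : E) 1)).toReal
  have hr₀ : 0 < r := by linarith
  have hvol : (μ (ball x₀ r)).toReal = r ^ d * ω := by
    rw [Measure.addHaar_ball_of_pos μ x₀ hr₀, ENNReal.toReal_mul,
      ENNReal.toReal_ofReal (by positivity)]
  have hint : ∫ y in ball x₀ r, (1 + ‖y‖) ^ (-(d + γ)) ∂μ ≤ (4 * r) ^ (θ - γ) * I :=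
    setIntegral_one_add_norm_rpow_neg_le μ measurableSet_ball hθ hγθ (by positivity)
      fun y hy => one_add_norm_le_four_mul_of_mem_ball hy hr hx₀
  have hw : (4 * r) ^ (-(d + γ)) ≤ (1 + ‖x‖) ^ (-(d + γ)) :=
    Real.rpow_le_rpow_of_nonpos (by positivity) (one_add_norm_le_four_mul_of_mem_ball hx hr hx₀)
      (by linarith [(d.cast_nonneg : (0 : ℝ) ≤ d)])
  calc scaledBallAverage μ θ (fun y => (1 + ‖y‖) ^ (-(d + γ))) x₀ r
      ≤ ((1 + r) ^ θ)⁻¹ * (r ^ d * ω)⁻¹ * ((4 * r) ^ (θ - γ) * I) := by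
        unfold scaledBallAverage
        rw [hvol]
        gcongr
    _ = ((1 + r) ^ θ)⁻¹ * (r ^ d)⁻¹ * (4 * r) ^ (θ - γ) * (I / ω) := by
        rw [mul_inv]
        ring
    _ ≤ 4 ^ (d + θ) * (4 * r) ^ (-(d + γ)) * (I / ω) :=
        mul_le_mul_of_nonneg_right (inv_one_add_rpow_mul_inv_pow_mul_rpow_le d hr₀ hθ.le)
          (by positivity)
    _ ≤ 4 ^ (d + θ) * (1 + ‖x‖) ^ (-(d + γ)) * (I / ω) := by gcongr
    _ = 4 ^ (d + θ) * (I / ω) * (1 + ‖x‖) ^ (-(d + γ)) := by ring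

theorem exists_scaledBallAverage_one_add_norm_rpow_neg_le {γ : ℝ} (hθ : 0 < θ) (hγ : 0 ≤ γ)
    (hγθ : γ ≤ θ) : ∃ C : ℝ, 0 < C ∧ ∀ (x₀ : E) (r : ℝ), ∀ x ∈ ball x₀ r,
      scaledBallAverage μ θ (fun y => (1 + ‖y‖) ^ (-(finrank ℝ E + γ))) x₀ r
        ≤ C * (1 + ‖x‖) ^ (-(finrank ℝ E + γ)) := by
  set C₁ : ℝ := 3 ^ (finrank ℝ E + γ)
  set C₂ : ℝ := 4 ^ (finrank ℝ E + θ) * ((∫ y, (1 + ‖y‖) ^ (-(finrank ℝ E + θ)) ∂μ)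
    / (μ (ball 0 1)).toReal)
  have hC₂ : 0 ≤ C₂ := by
    have : 0 ≤ ∫ y, (1 + ‖y‖) ^ (-(finrank ℝ E + θ)) ∂μ := integral_nonneg fun y => by positivity
    positivity
  refine ⟨C₁ + C₂, by positivity, fun x₀ r x hx => ?_⟩
  by_cases h : r ≤ 1 ∨ 2 * r ≤ ‖x₀‖
  · calc _ ≤ C₁ * (1 + ‖x‖) ^ (-(finrank ℝ E + γ)) :=
          scaledBallAverage_le_of_small_or_far μ hθ.le (by positivity) hx h
      _ ≤ _ := by gcongr; linarith
  · push Not at h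
    calc _ ≤ C₂ * (1 + ‖x‖) ^ (-(finrank ℝ E + γ)) :=
          scaledBallAverage_le_of_large μ hθ hγ hγθ hx h.1.le h.2.le
      _ ≤ _ := by gcongr; exact le_add_of_nonneg_left (by positivity)

end HaarWeight

theorem stmt5_general (n : ℕ) (θ γ : ℝ) (hθ : 0 < θ) (hγ : 0 ≤ γ) (hγθ : γ ≤ θ) :
    ∃ C : ℝ, 0 < C ∧
      ∀ (x₀ : EuclideanSpace ℝ (Fin n)) (r : ℝ), 0 < r →
        ∀ᵐ x ∂(volume.restrict (ball x₀ r)),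
          ((1 + r) ^ θ)⁻¹ * ((volume (ball x₀ r)).toReal)⁻¹ *
              (∫ y in ball x₀ r, (1 + ‖y‖) ^ (-((n : ℝ) + γ)))
            ≤ C * (1 + ‖x‖) ^ (-((n : ℝ) + γ)) := by
  obtain ⟨C, hC, hbound⟩ := exists_scaledBallAverage_one_add_norm_rpow_neg_le
    (volume : Measure (EuclideanSpace ℝ (Fin n))) hθ hγ hγθ
  rw [finrank_euclideanSpace_fin] at hbound
  refine ⟨C, hC, fun x₀ r _ => ?_⟩
  filter_upwards [ae_restrict_mem measurableSet_ball] with x hx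
  exact hbound x₀ r x hx

/-- with `V = 1` (so `ρ ≡ 1`, `Ψ_θ(B(x₀,r)) = (1+r)^θ`), the weight
`w(x) = (1+|x|)^{-(n+γ)}` belongs to `A_1^{ρ,θ}` whenever `0 ≤ γ ≤ θ`. -/
theorem stmt5 (n : ℕ) (hn : 0 < n) (θ γ : ℝ) (hθ : 0 < θ) (hγ : 0 ≤ γ) (hγθ : γ ≤ θ) :
    ∃ C : ℝ, 0 < C ∧
      ∀ (x₀ : EuclideanSpace ℝ (Fin n)) (r : ℝ), 0 < r →
        ∀ᵐ x ∂(volume.restrict (ball x₀ r)),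
          ((1 + r) ^ θ)⁻¹ * ((volume (ball x₀ r)).toReal)⁻¹ *
              (∫ y in ball x₀ r, (1 + ‖y‖) ^ (-((n : ℝ) + γ)))
            ≤ C * (1 + ‖x‖) ^ (-((n : ℝ) + γ)) :=
  stmt5_general n θ γ hθ hγ hγθ
end

section
/- Let f be locally integrable on ℝⁿ, θ > 0, and 0 < δ < 1. Suppose M_{V,θ}f is finite a.e. Then (M_{V,θ}f)^δ is an A_1^{ρ,θ} weight: there exists a constant C (depending only on n, θ, δ) such that for every cube Q and almost every x ∈ Q, (Ψ_θ(Q)|Q|)^{-1} ∫_Q (M_{V,θ}f(y))^δ dy ≤ C (M_{V,θ}f(x))^δ. -/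
open MeasureTheory Metric ENNReal

noncomputable section

/-- Axis-parallel cube centered at `x` with sidelength `r`. -/
def cube {n : ℕ} (x : EuclideanSpace ℝ (Fin n)) (r : ℝ) : Set (EuclideanSpace ℝ (Fin n)) :=
  {y | ∀ i, |y i - x i| ≤ r / 2}

/-- The localized maximal operator `M_{V,θ}` over cubes, with values in `ℝ≥0∞`. -/
def MVcube {n : ℕ} (ρ : EuclideanSpace ℝ (Fin n) → ℝ) (θ : ℝ)
    (f : EuclideanSpace ℝ (Fin n) → ℝ) (x : EuclideanSpace ℝ (Fin n)) : ℝ≥0∞ :=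
  ⨆ (z : EuclideanSpace ℝ (Fin n)) (r : ℝ) (_ : 0 < r ∧ x ∈ cube z r),
    (ENNReal.ofReal ((1 + r / ρ z) ^ θ) * volume (cube z r))⁻¹ *
      ∫⁻ y in cube z r, ENNReal.ofReal |f y|

/-!
Split `f` at the tripled cube `3Q`. For `x, y ∈ Q`, a cube through `y` that leaves `3Q` is longer
than `Q`, so a concentric cube of at most three times its sidelength contains `x`; hence the
maximal function of the far part is bounded on `Q` by a constant times `M_{V,θ} f(x)`. The maximal
function of the near part is of weak type `(1,1)` (Vitali covering, using `Ψ_θ ≥ 1`), and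
Kolmogorov's inequality turns this into a bound for the average of its `δ`-th power over `Q` by
`(Ψ_θ(Q) M_{V,θ} f(x))^δ ≤ Ψ_θ(Q) (M_{V,θ} f(x))^δ`.
-/

section Kolmogorov

open Filter Topology

def kolmogorovConst (δ : ℝ) : ℝ≥0∞ := 1 + 2 ^ δ * (1 - 2 ^ (δ - 1))⁻¹

lemma kolmogorovConst_ne_top {δ : ℝ} (hδ₀ : 0 ≤ δ) (hδ₁ : δ < 1) : kolmogorovConst δ ≠ ⊤ := by
  have h : (2 : ℝ≥0∞) ^ (δ - 1) < 1 :=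
    ENNReal.rpow_lt_one_of_one_lt_of_neg one_lt_two (by linarith)
  exact add_ne_top.2 ⟨one_ne_top, mul_ne_top (ENNReal.rpow_ne_top_of_nonneg hδ₀ (by simp))
    (ENNReal.inv_ne_top.2 (tsub_pos_of_lt h).ne')⟩

variable {t : ℝ≥0∞}

lemma exists_two_pow_lt_le (ht₀ : t ≠ 0) (ht : t ≠ ⊤) {a : ℝ≥0∞} (hta : t < a) (ha : a ≠ ⊤) :
    ∃ k : ℕ, t * 2 ^ k < a ∧ a ≤ t * 2 ^ (k + 1) := by
  classical
  have hlim : Tendsto (fun k : ℕ => t * 2 ^ (k + 1)) atTop (𝓝 ⊤) := by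
    rw [← ENNReal.mul_top ht₀]
    exact ENNReal.Tendsto.const_mul ((ENNReal.tendsto_pow_atTop_nhds_top_iff.2 one_lt_two).comp
      (tendsto_add_atTop_nat 1)) (.inr ht)
  have hex : ∃ k : ℕ, a ≤ t * 2 ^ (k + 1) :=
    ((hlim.eventually (lt_mem_nhds ha.lt_top)).exists).imp fun _ => le_of_lt
  refine ⟨Nat.find hex, ?_, Nat.find_spec hex⟩
  cases hk : Nat.find hex with
  | zero => simpa using hta
  | succ k => exact not_le.1 (Nat.find_min hex (hk ▸ Nat.lt_succ_self k))

lemma rpow_le_add_tsum_indicator (ht₀ : t ≠ 0) (ht : t ≠ ⊤) {δ : ℝ} (hδ : 0 ≤ δ) (a : ℝ≥0∞) :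
    a ^ δ ≤
      t ^ δ + ∑' k : ℕ, (Set.Ioi (t * 2 ^ k)).indicator (fun _ => (t * 2 ^ (k + 1)) ^ δ) a := by
  rcases le_or_gt a t with hat | hta
  · exact le_add_right (ENNReal.rpow_le_rpow hat hδ)
  rcases eq_or_ne a ⊤ with rfl | ha
  · calc ⊤ ^ δ ≤ ∑' _ : ℕ, t ^ δ := by
          rw [ENNReal.tsum_const_eq_top_of_ne_zero (ENNReal.rpow_pos ht₀.bot_lt ht).ne']
          exact le_top
      _ ≤ ∑' k : ℕ, (Set.Ioi (t * 2 ^ k)).indicator (fun _ => (t * 2 ^ (k + 1)) ^ δ) ⊤ := by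
          refine ENNReal.tsum_le_tsum fun k => ?_
          rw [Set.indicator_of_mem (Set.mem_Ioi.2 (mul_lt_top ht.lt_top (by simp)))]
          exact ENNReal.rpow_le_rpow (le_mul_of_one_le_right' (one_le_pow₀ one_le_two)) hδ
      _ ≤ _ := le_add_self
  obtain ⟨k, hk, hk'⟩ := exists_two_pow_lt_le ht₀ ht hta ha
  refine le_add_left ((ENNReal.rpow_le_rpow hk' hδ).trans (le_of_eq_of_le ?_ (ENNReal.le_tsum k)))
  rw [Set.indicator_of_mem (Set.mem_Ioi.2 hk)]

lemma rpow_sub_one_mul_self {x : ℝ≥0∞} (hx₀ : x ≠ 0) (hx : x ≠ ⊤) (δ : ℝ) :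
    x ^ (δ - 1) * x = x ^ δ := by
  conv_rhs => rw [← sub_add_cancel δ 1, ENNReal.rpow_add _ _ hx₀ hx, ENNReal.rpow_one]

variable {α : Type*} [MeasurableSpace α] {ν : Measure α} {h : α → ℝ≥0∞} {δ : ℝ}

lemma rpow_mul_measure_lt_le (ht₀ : t ≠ 0) (ht : t ≠ ⊤)
    (hweak : ∀ l, l * ν {x | l < h x} ≤ t * ν Set.univ) (k : ℕ) :
    (t * 2 ^ (k + 1)) ^ δ * ν {x | t * 2 ^ k < h x} ≤
      2 ^ δ * t ^ δ * ν Set.univ * (2 ^ (δ - 1)) ^ k := by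
  have hk₀ : t * 2 ^ k ≠ 0 := mul_ne_zero ht₀ (by simp)
  have hk : t * 2 ^ k ≠ ⊤ := mul_ne_top ht (by simp)
  calc (t * 2 ^ (k + 1)) ^ δ * ν {x | t * 2 ^ k < h x}
      = 2 ^ δ * ((t * 2 ^ k) ^ (δ - 1) * ((t * 2 ^ k) * ν {x | t * 2 ^ k < h x})) := by
        rw [← mul_assoc _ (t * 2 ^ k), rpow_sub_one_mul_self hk₀ hk, pow_succ, ← mul_assoc,
          ENNReal.mul_rpow_of_ne_top hk (by simp)]
        ring
    _ ≤ 2 ^ δ * ((t * 2 ^ k) ^ (δ - 1) * (t * ν Set.univ)) := by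
        gcongr 2 ^ δ * (_ * ?_)
        exact hweak _
    _ = 2 ^ δ * t ^ δ * ν Set.univ * (2 ^ (δ - 1)) ^ k := by
        rw [ENNReal.mul_rpow_of_ne_top ht (by simp), ← ENNReal.rpow_natCast_mul, mul_comm (k : ℝ),
          ENNReal.rpow_mul_natCast, ← rpow_sub_one_mul_self ht₀ ht δ]
        ring

lemma ae_eq_zero_of_mul_measure_lt_le_zero (hweak : ∀ l, l * ν {x | l < h x} ≤ 0) :
    ∀ᵐ x ∂ν, h x = 0 := by
  have hnull (k : ℕ) : ν {x | (k : ℝ≥0∞)⁻¹ < h x} = 0 := by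
    simpa using hweak (k : ℝ≥0∞)⁻¹
  refine measure_mono_null (fun x hx => ?_) (measure_iUnion_null hnull)
  simpa using ENNReal.exists_inv_nat_lt hx

theorem lintegral_rpow_le_of_mul_measure_lt_le (hδ₀ : 0 < δ) (ht : t ≠ ⊤)
    (hweak : ∀ l, l * ν {x | l < h x} ≤ t * ν Set.univ) :
    ∫⁻ x, h x ^ δ ∂ν ≤ kolmogorovConst δ * t ^ δ * ν Set.univ := by
  rcases eq_or_ne t 0 with rfl | ht₀
  · have h0 := ae_eq_zero_of_mul_measure_lt_le_zero (by simpa using hweak)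
    rw [lintegral_congr_ae (g := fun _ => 0) (h0.mono fun x hx => by simp [hx, hδ₀])]
    simp
  -- `h` need not be measurable, so its level sets are replaced by measurable hulls.
  set S : ℕ → Set α := fun k => toMeasurable ν {x | t * 2 ^ k < h x}
  calc ∫⁻ x, h x ^ δ ∂ν
      ≤ ∫⁻ x, t ^ δ + ∑' k : ℕ, (S k).indicator (fun _ => (t * 2 ^ (k + 1)) ^ δ) x ∂ν :=
        lintegral_mono fun x => (rpow_le_add_tsum_indicator ht₀ ht hδ₀.le (h x)).trans <|
          add_le_add le_rfl <| ENNReal.tsum_le_tsum fun k => by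
            rw [← Set.indicator_comp_right]
            exact Set.indicator_le_indicator_of_subset (subset_toMeasurable ν _)
              (fun _ => zero_le) x
    _ = t ^ δ * ν Set.univ + ∑' k : ℕ, (t * 2 ^ (k + 1)) ^ δ * ν {x | t * 2 ^ k < h x} := by
        rw [lintegral_add_left measurable_const, lintegral_const, lintegral_tsum fun k =>
          (measurable_const.indicator (measurableSet_toMeasurable _ _)).aemeasurable]
        simp_rw [lintegral_indicator_const (measurableSet_toMeasurable _ _), measure_toMeasurable]
    _ ≤ t ^ δ * ν Set.univ + ∑' k : ℕ, 2 ^ δ * t ^ δ * ν Set.univ * (2 ^ (δ - 1)) ^ k := by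
        exact add_le_add le_rfl (ENNReal.tsum_le_tsum (rpow_mul_measure_lt_le ht₀ ht hweak))
    _ = kolmogorovConst δ * t ^ δ * ν Set.univ := by
        rw [ENNReal.tsum_mul_left, ENNReal.tsum_geometric, kolmogorovConst]
        ring

end Kolmogorov

section Cubes

variable {n : ℕ}

lemma cube_eq_preimage (z : EuclideanSpace ℝ (Fin n)) (r : ℝ) :
    cube z r = (MeasurableEquiv.toLp 2 (Fin n → ℝ)).symm ⁻¹'
      Set.univ.pi fun i => Set.Icc (z i - r / 2) (z i + r / 2) := by
  ext y
  simp only [cube, abs_sub_le_iff, Set.mem_preimage, Set.mem_univ_pi,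
    Set.mem_Icc, MeasurableEquiv.coe_toLp_symm]
  exact forall_congr' fun i => by constructor <;> rintro ⟨h₁, h₂⟩ <;> constructor <;> linarith

lemma volume_cube (z : EuclideanSpace ℝ (Fin n)) (r : ℝ) :
    volume (cube z r) = ENNReal.ofReal r ^ n := by
  rw [cube_eq_preimage, (EuclideanSpace.volume_preserving_symm_measurableEquiv_toLp
    (Fin n)).measure_preimage (MeasurableSet.univ_pi fun _ => measurableSet_Icc).nullMeasurableSet,
    volume_pi_pi]
  simp

lemma isCompact_cube (z : EuclideanSpace ℝ (Fin n)) (r : ℝ) : IsCompact (cube z r) := by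
  rw [cube_eq_preimage]
  exact (PiLp.continuousLinearEquiv 2 ℝ (fun _ : Fin n => ℝ)).toHomeomorph.isCompact_preimage.2
    (isCompact_univ_pi fun _ => isCompact_Icc)

lemma measurableSet_cube (z : EuclideanSpace ℝ (Fin n)) (r : ℝ) : MeasurableSet (cube z r) :=
  (isCompact_cube z r).isClosed.measurableSet

lemma volume_cube_ne_zero (z : EuclideanSpace ℝ (Fin n)) {r : ℝ} (hr : 0 < r) :
    volume (cube z r) ≠ 0 := by
  rw [volume_cube]; exact pow_ne_zero _ (ENNReal.ofReal_pos.2 hr).ne'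

lemma volume_cube_ne_top (z : EuclideanSpace ℝ (Fin n)) (r : ℝ) : volume (cube z r) ≠ ⊤ := by
  rw [volume_cube]; exact pow_ne_top ofReal_ne_top

lemma volume_cube_le_of_le_mul (z z' : EuclideanSpace ℝ (Fin n)) {r R c : ℝ} (hR : R ≤ c * r)
    (hc : 0 ≤ c) : volume (cube z R) ≤ ENNReal.ofReal c ^ n * volume (cube z' r) := by
  rw [volume_cube, volume_cube, ← mul_pow, ← ENNReal.ofReal_mul hc]
  gcongr

lemma mem_cube_self (z : EuclideanSpace ℝ (Fin n)) {r : ℝ} (hr : 0 ≤ r) : z ∈ cube z r :=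
  fun i => by simpa using by positivity

lemma cube_mono (z : EuclideanSpace ℝ (Fin n)) {r r' : ℝ} (h : r ≤ r') : cube z r ⊆ cube z r' :=
  fun _ hy i => (hy i).trans (by linarith)

lemma ball_subset_cube (z : EuclideanSpace ℝ (Fin n)) (r : ℝ) : ball z (r / 2) ⊆ cube z r :=
  fun y hy i => (PiLp.norm_apply_le (y - z) i).trans (mem_ball_iff_norm.1 hy).le

lemma abs_sub_le_of_mem_cube {z x y : EuclideanSpace ℝ (Fin n)} {r : ℝ} (hx : x ∈ cube z r)
    (hy : y ∈ cube z r) (i : Fin n) : |x i - y i| ≤ r := by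
  have := abs_sub_le (x i) (z i) (y i)
  have := hx i
  have := hy i
  rw [abs_sub_comm (z i)] at *
  linarith

lemma cube_subset_of_not_disjoint {z z' : EuclideanSpace ℝ (Fin n)} {r r' : ℝ}
    (h : (cube z r ∩ cube z' r').Nonempty) (hr : r ≤ 2 * r') : cube z r ⊆ cube z' (5 * r') := by
  obtain ⟨w, hw, hw'⟩ := h
  intro y hy i
  linarith [abs_sub_le (y i) (w i) (z' i), abs_sub_le_of_mem_cube hy hw i, hw' i]

lemma mem_cube_of_mem_cube_of_mem_cube {z z' x y : EuclideanSpace ℝ (Fin n)} {r r' : ℝ}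
    (hx : x ∈ cube z r) (hy : y ∈ cube z r) (hy' : y ∈ cube z' r') : x ∈ cube z' (r' + 2 * r) :=
  fun i => by linarith [abs_sub_le (x i) (y i) (z' i), abs_sub_le_of_mem_cube hx hy i, hy' i]

lemma lt_of_not_subset_cube_three_mul {z z' y : EuclideanSpace ℝ (Fin n)} {r r' : ℝ}
    (hy : y ∈ cube z r) (hy' : y ∈ cube z' r') (h : ¬ cube z' r' ⊆ cube z (3 * r)) : r < r' := by
  obtain ⟨w, hw, hw3⟩ := Set.not_subset.1 h
  obtain ⟨i, hi⟩ : ∃ i, ¬ |w i - z i| ≤ 3 * r / 2 := by simpa [cube] using hw3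
  linarith [abs_sub_le (w i) (y i) (z i), abs_sub_le_of_mem_cube hw hy' i, hy i]

/-- `Ψ_θ(Q) |Q|` for the cube `Q = cube z r`. -/
def weightedVolume (ρ : EuclideanSpace ℝ (Fin n) → ℝ) (θ : ℝ) (z : EuclideanSpace ℝ (Fin n))
    (r : ℝ) : ℝ≥0∞ :=
  ENNReal.ofReal ((1 + r / ρ z) ^ θ) * volume (cube z r)

section weightedVolume

variable {ρ : EuclideanSpace ℝ (Fin n) → ℝ} {θ : ℝ} (z : EuclideanSpace ℝ (Fin n)) {r : ℝ}

lemma one_le_ofReal_one_add_div_rpow (hρ : ∀ x, 0 < ρ x) (hθ : 0 ≤ θ) (hr : 0 ≤ r) :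
    1 ≤ ENNReal.ofReal ((1 + r / ρ z) ^ θ) := by
  rw [← ENNReal.ofReal_one]
  exact ENNReal.ofReal_le_ofReal
    (Real.one_le_rpow (le_add_of_nonneg_right (div_nonneg hr (hρ z).le)) hθ)

lemma volume_cube_le_weightedVolume (hρ : ∀ x, 0 < ρ x) (hθ : 0 ≤ θ) (hr : 0 ≤ r) :
    volume (cube z r) ≤ weightedVolume ρ θ z r :=
  le_mul_of_one_le_left' (one_le_ofReal_one_add_div_rpow z hρ hθ hr)

lemma weightedVolume_ne_zero (hρ : ∀ x, 0 < ρ x) (hθ : 0 ≤ θ) (hr : 0 < r) :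
    weightedVolume ρ θ z r ≠ 0 :=
  ((volume_cube_ne_zero z hr).bot_lt.trans_le
    (volume_cube_le_weightedVolume z hρ hθ hr.le)).ne'

lemma weightedVolume_ne_top : weightedVolume ρ θ z r ≠ ⊤ :=
  mul_ne_top ofReal_ne_top (volume_cube_ne_top z r)

lemma weightedVolume_le_of_le_mul (hρ : ∀ x, 0 < ρ x) (hθ : 0 ≤ θ) {R c : ℝ} (hR₀ : 0 ≤ R)
    (hr : 0 ≤ r) (hRr : R ≤ c * r) (hc : 1 ≤ c) :
    weightedVolume ρ θ z R ≤
      ENNReal.ofReal c ^ n * ENNReal.ofReal (c ^ θ) * weightedVolume ρ θ z r := by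
  have hρz := hρ z
  have hΨ : (1 + R / ρ z) ^ θ ≤ c ^ θ * (1 + r / ρ z) ^ θ := by
    rw [← Real.mul_rpow (by linarith) (by positivity)]
    gcongr
    calc 1 + R / ρ z ≤ c + c * r / ρ z := by gcongr
      _ = c * (1 + r / ρ z) := by ring
  calc weightedVolume ρ θ z R
      ≤ ENNReal.ofReal (c ^ θ * (1 + r / ρ z) ^ θ) * (ENNReal.ofReal c ^ n * volume (cube z r)) :=
        mul_le_mul' (ENNReal.ofReal_le_ofReal hΨ) (volume_cube_le_of_le_mul z z hRr (by linarith))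
    _ = _ := by
        rw [weightedVolume, ENNReal.ofReal_mul (by positivity)]
        ring

end weightedVolume

section MVcube

variable {ρ : EuclideanSpace ℝ (Fin n) → ℝ} {θ : ℝ} {f : EuclideanSpace ℝ (Fin n) → ℝ}
  {z x y : EuclideanSpace ℝ (Fin n)} {r : ℝ}

lemma inv_weightedVolume_mul_le_MVcube (hr : 0 < r) (hx : x ∈ cube z r) :
    (weightedVolume ρ θ z r)⁻¹ * ∫⁻ y in cube z r, ENNReal.ofReal |f y| ≤ MVcube ρ θ f x :=
  le_iSup_of_le z <| le_iSup_of_le r <| le_iSup_of_le ⟨hr, hx⟩ le_rfl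

lemma setLIntegral_cube_le_weightedVolume_mul (hρ : ∀ x, 0 < ρ x) (hθ : 0 ≤ θ) (hr : 0 < r)
    (hx : x ∈ cube z r) :
    ∫⁻ y in cube z r, ENNReal.ofReal |f y| ≤ weightedVolume ρ θ z r * MVcube ρ θ f x := by
  rw [mul_comm, ← ENNReal.div_le_iff (weightedVolume_ne_zero z hρ hθ hr)
    (weightedVolume_ne_top z), ENNReal.div_eq_inv_mul]
  exact inv_weightedVolume_mul_le_MVcube hr hx

lemma setLIntegral_ofReal_abs_indicator {S : Set (EuclideanSpace ℝ (Fin n))}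
    (hS : MeasurableSet S) (Q : Set (EuclideanSpace ℝ (Fin n))) :
    ∫⁻ y in Q, ENNReal.ofReal |S.indicator f y| = ∫⁻ y in S ∩ Q, ENNReal.ofReal |f y| := by
  rw [← setLIntegral_indicator hS]
  refine lintegral_congr fun y => ?_
  exact congr_fun (Set.indicator_comp_of_zero (g := fun a => ENNReal.ofReal |a|) (by simp)).symm y

lemma MVcube_le_add_indicator {S : Set (EuclideanSpace ℝ (Fin n))} (hS : MeasurableSet S) :
    MVcube ρ θ f y ≤ MVcube ρ θ (S.indicator f) y + MVcube ρ θ (Sᶜ.indicator f) y := by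
  refine iSup_le fun z => iSup_le fun r => iSup_le fun ⟨hr, hy⟩ => ?_
  rw [← lintegral_inter_add_sdiff _ _ hS, Set.sdiff_eq, Set.inter_comm, Set.inter_comm _ Sᶜ,
    ← setLIntegral_ofReal_abs_indicator hS, ← setLIntegral_ofReal_abs_indicator hS.compl, mul_add]
  exact add_le_add (inv_weightedVolume_mul_le_MVcube hr hy) (inv_weightedVolume_mul_le_MVcube hr hy)

lemma MVcube_indicator_compl_le (hρ : ∀ x, 0 < ρ x) (hθ : 0 ≤ θ) (hr : 0 < r)
    (hx : x ∈ cube z r) (hy : y ∈ cube z r) :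
    MVcube ρ θ ((cube z (3 * r))ᶜ.indicator f) y ≤
      3 ^ n * ENNReal.ofReal (3 ^ θ) * MVcube ρ θ f x := by
  refine iSup_le fun z' => iSup_le fun r' => iSup_le fun ⟨hr', hy'⟩ => ?_
  change (weightedVolume ρ θ z' r')⁻¹ * _ ≤ _
  rw [setLIntegral_ofReal_abs_indicator (measurableSet_cube z (3 * r)).compl]
  by_cases hsub : cube z' r' ⊆ cube z (3 * r)
  · rw [(Set.disjoint_compl_left_iff_subset.2 hsub).inter_eq, Measure.restrict_empty,
      lintegral_zero_measure, mul_zero]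
    exact zero_le
  have hrr' := lt_of_not_subset_cube_three_mul hy hy' hsub
  have hW := weightedVolume_le_of_le_mul z' hρ hθ (R := r' + 2 * r) (c := 3) (by linarith)
    hr'.le (by linarith) (by norm_num)
  rw [ENNReal.ofReal_ofNat] at hW
  calc (weightedVolume ρ θ z' r')⁻¹ * ∫⁻ w in (cube z (3 * r))ᶜ ∩ cube z' r', ENNReal.ofReal |f w|
      ≤ (weightedVolume ρ θ z' r')⁻¹ * (weightedVolume ρ θ z' (r' + 2 * r) * MVcube ρ θ f x) := by
        gcongr
        exact (lintegral_mono_set (Set.inter_subset_right.trans (cube_mono z' (by linarith)))).trans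
          (setLIntegral_cube_le_weightedVolume_mul hρ hθ (by linarith)
            (mem_cube_of_mem_cube_of_mem_cube hx hy hy'))
    _ ≤ (weightedVolume ρ θ z' r')⁻¹ *
          (weightedVolume ρ θ z' r' * (3 ^ n * ENNReal.ofReal (3 ^ θ) * MVcube ρ θ f x)) := by
        gcongr _ * ?_
        calc _ ≤ 3 ^ n * ENNReal.ofReal (3 ^ θ) * weightedVolume ρ θ z' r' * MVcube ρ θ f x := by
              gcongr
          _ = _ := by ring
    _ = 3 ^ n * ENNReal.ofReal (3 ^ θ) * MVcube ρ θ f x :=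
        ENNReal.inv_mul_cancel_left (weightedVolume_ne_zero z' hρ hθ hr') (weightedVolume_ne_top z')

end MVcube

section WeakType

variable (g : EuclideanSpace ℝ (Fin n) → ℝ≥0∞) {l : ℝ≥0∞}

lemma mul_volume_biUnion_cube_le_of_bddAbove {T : Set (EuclideanSpace ℝ (Fin n) × ℝ)}
    (hT : ∀ p ∈ T, 0 < p.2 ∧ l * volume (cube p.1 p.2) ≤ ∫⁻ y in cube p.1 p.2, g y)
    {R : ℝ} (hR : ∀ p ∈ T, p.2 ≤ R) :
    l * volume (⋃ p ∈ T, cube p.1 p.2) ≤ 5 ^ n * ∫⁻ y, g y := by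
  obtain ⟨u, huT, hdisj, hcov⟩ := Vitali.exists_disjoint_subfamily_covering_enlargement
    (fun p => cube p.1 p.2) T Prod.snd 2 one_lt_two (fun p hp => (hT p hp).1.le) R hR
    (fun p hp => ⟨p.1, mem_cube_self _ (hT p hp).1.le⟩)
  have hu : u.Countable := hdisj.countable_of_nonempty_interior fun p hp =>
    ⟨p.1, isOpen_ball.subset_interior_iff.2 (ball_subset_cube p.1 p.2)
      (mem_ball_self (half_pos (hT p (huT hp)).1))⟩
  have := hu.to_subtype
  have hcover : ⋃ p ∈ T, cube p.1 p.2 ⊆ ⋃ b ∈ u, cube b.1 (5 * b.2) := by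
    refine Set.iUnion₂_subset fun p hp => ?_
    obtain ⟨b, hbu, hpb, hle⟩ := hcov p hp
    exact (cube_subset_of_not_disjoint hpb hle).trans
      (Set.subset_biUnion_of_mem (u := fun b => cube b.1 (5 * b.2)) hbu)
  calc l * volume (⋃ p ∈ T, cube p.1 p.2)
      ≤ l * ∑' b : u, volume (cube b.1.1 (5 * b.1.2)) := by
        gcongr
        exact (measure_mono hcover).trans (measure_biUnion_le _ hu _)
    _ ≤ l * ∑' b : u, 5 ^ n * volume (cube b.1.1 b.1.2) := by
        gcongr with b
        simpa using volume_cube_le_of_le_mul b.1.1 b.1.1 le_rfl (by norm_num : (0 : ℝ) ≤ 5)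
    _ = 5 ^ n * ∑' b : u, l * volume (cube b.1.1 b.1.2) := by
        rw [← ENNReal.tsum_mul_left, ← ENNReal.tsum_mul_left]
        exact tsum_congr fun _ => by ring
    _ ≤ 5 ^ n * ∑' b : u, ∫⁻ y in cube b.1.1 b.1.2, g y := by
        gcongr with b
        exact (hT b (huT b.2)).2
    _ = 5 ^ n * ∫⁻ y in ⋃ b : u, cube b.1.1 b.1.2, g y := by
        rw [lintegral_iUnion (s := fun b : u => cube b.1.1 b.1.2) (fun _ => measurableSet_cube _ _)
          fun b c hbc => hdisj b.2 c.2 (Subtype.coe_injective.ne hbc)]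
    _ ≤ 5 ^ n * ∫⁻ y, g y := by gcongr 5 ^ n * ?_; exact setLIntegral_le_lintegral _ _

lemma mul_volume_biUnion_cube_le {T : Set (EuclideanSpace ℝ (Fin n) × ℝ)}
    (hT : ∀ p ∈ T, 0 < p.2 ∧ l * volume (cube p.1 p.2) ≤ ∫⁻ y in cube p.1 p.2, g y) :
    l * volume (⋃ p ∈ T, cube p.1 p.2) ≤ 5 ^ n * ∫⁻ y, g y := by
  have hunion : ⋃ p ∈ T, cube p.1 p.2 = ⋃ k : ℕ, ⋃ p ∈ {p ∈ T | p.2 ≤ k}, cube p.1 p.2 := by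
    ext x
    simp only [Set.mem_iUnion, Set.mem_ofPred_eq, exists_prop]
    exact ⟨fun ⟨p, hp, hx⟩ => ⟨⌈p.2⌉₊, p, ⟨hp, Nat.le_ceil _⟩, hx⟩,
      fun ⟨_, p, ⟨hp, _⟩, hx⟩ => ⟨p, hp, hx⟩⟩
  have hmono : Monotone fun k : ℕ => ⋃ p ∈ {p ∈ T | p.2 ≤ k}, cube p.1 p.2 :=
    fun k k' hkk' => Set.biUnion_subset_biUnion_left fun p ⟨hp, hpk⟩ =>
      ⟨hp, hpk.trans (Nat.cast_le.2 hkk')⟩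
  rw [hunion, hmono.measure_iUnion, ENNReal.mul_iSup]
  exact iSup_le fun k => mul_volume_biUnion_cube_le_of_bddAbove g
    (fun p hp => hT p hp.1) (fun p hp => hp.2)

end WeakType

lemma mul_volume_lt_MVcube_le {ρ : EuclideanSpace ℝ (Fin n) → ℝ} (hρ : ∀ x, 0 < ρ x) {θ : ℝ}
    (hθ : 0 ≤ θ) (f : EuclideanSpace ℝ (Fin n) → ℝ) (l : ℝ≥0∞) :
    l * volume {x | l < MVcube ρ θ f x} ≤ 5 ^ n * ∫⁻ y, ENNReal.ofReal |f y| := by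
  refine le_trans ?_ (mul_volume_biUnion_cube_le (fun y => ENNReal.ofReal |f y|)
    (T := {p | 0 < p.2 ∧ l * volume (cube p.1 p.2) ≤ ∫⁻ y in cube p.1 p.2, ENNReal.ofReal |f y|})
    fun p hp => hp)
  gcongr
  intro x hx
  simp only [Set.mem_ofPred_eq, MVcube, lt_iSup_iff] at hx
  obtain ⟨z, r, ⟨hr, hxQ⟩, hl⟩ := hx
  refine Set.mem_biUnion (x := (z, r)) ⟨hr, ?_⟩ hxQ
  calc l * volume (cube z r) ≤ l * weightedVolume ρ θ z r := by
        gcongr; exact volume_cube_le_weightedVolume z hρ hθ hr.le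
    _ ≤ _ := by
        rw [← ENNReal.le_div_iff_mul_le (.inl (weightedVolume_ne_zero z hρ hθ hr))
          (.inl (weightedVolume_ne_top z)), ENNReal.div_eq_inv_mul]
        exact hl.le

lemma MVcube_le_MVcube_indicator_add {ρ : EuclideanSpace ℝ (Fin n) → ℝ} (hρ : ∀ x, 0 < ρ x)
    {θ : ℝ} (hθ : 0 ≤ θ) (f : EuclideanSpace ℝ (Fin n) → ℝ) {z x y : EuclideanSpace ℝ (Fin n)}
    {r : ℝ} (hr : 0 < r) (hx : x ∈ cube z r) (hy : y ∈ cube z r) :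
    MVcube ρ θ f y ≤ MVcube ρ θ ((cube z (3 * r)).indicator f) y +
      3 ^ n * ENNReal.ofReal (3 ^ θ) * MVcube ρ θ f x :=
  (MVcube_le_add_indicator (measurableSet_cube _ _)).trans
    (add_le_add le_rfl (MVcube_indicator_compl_le hρ hθ hr hx hy))

lemma lintegral_ofReal_abs_indicator_le {ρ : EuclideanSpace ℝ (Fin n) → ℝ} (hρ : ∀ x, 0 < ρ x)
    {θ : ℝ} (hθ : 0 ≤ θ) (f : EuclideanSpace ℝ (Fin n) → ℝ) {z x : EuclideanSpace ℝ (Fin n)}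
    {r : ℝ} (hr : 0 < r) (hx : x ∈ cube z r) :
    ∫⁻ y, ENNReal.ofReal |(cube z (3 * r)).indicator f y| ≤
      3 ^ n * ENNReal.ofReal (3 ^ θ) * weightedVolume ρ θ z r * MVcube ρ θ f x := by
  have hW := weightedVolume_le_of_le_mul z hρ hθ (R := 3 * r) (c := 3) (by linarith) hr.le le_rfl
    (by norm_num)
  rw [ENNReal.ofReal_ofNat] at hW
  rw [← setLIntegral_univ, setLIntegral_ofReal_abs_indicator (measurableSet_cube _ _),
    Set.inter_univ]
  calc ∫⁻ y in cube z (3 * r), ENNReal.ofReal |f y|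
      ≤ weightedVolume ρ θ z (3 * r) * MVcube ρ θ f x :=
        setLIntegral_cube_le_weightedVolume_mul hρ hθ (by linarith) (cube_mono z (by linarith) hx)
    _ ≤ _ := by gcongr

def a1Const (n : ℕ) (θ δ : ℝ) : ℝ≥0∞ :=
  kolmogorovConst δ * (5 ^ n * (3 ^ n * ENNReal.ofReal (3 ^ θ))) ^ δ +
    (3 ^ n * ENNReal.ofReal (3 ^ θ)) ^ δ

lemma a1Const_ne_top {θ δ : ℝ} (hδ₀ : 0 ≤ δ) (hδ₁ : δ < 1) : a1Const n θ δ ≠ ⊤ := by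
  have := kolmogorovConst_ne_top hδ₀ hδ₁
  unfold a1Const
  finiteness

lemma setLIntegral_MVcube_rpow_le {ρ : EuclideanSpace ℝ (Fin n) → ℝ} (hρ : ∀ x, 0 < ρ x)
    {θ δ : ℝ} (hθ : 0 ≤ θ) (hδ₀ : 0 < δ) (hδ₁ : δ ≤ 1) (f : EuclideanSpace ℝ (Fin n) → ℝ)
    {z x : EuclideanSpace ℝ (Fin n)} {r : ℝ} (hr : 0 < r) (hx : x ∈ cube z r)
    (hA : MVcube ρ θ f x ≠ ⊤) :
    ∫⁻ y in cube z r, MVcube ρ θ f y ^ δ ≤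
      a1Const n θ δ * MVcube ρ θ f x ^ δ * weightedVolume ρ θ z r := by
  set A := MVcube ρ θ f x
  set c : ℝ≥0∞ := 3 ^ n * ENNReal.ofReal (3 ^ θ)
  set Ψ := ENNReal.ofReal ((1 + r / ρ z) ^ θ)
  set g := (cube z (3 * r)).indicator f
  have hΨ : 1 ≤ Ψ := one_le_ofReal_one_add_div_rpow z hρ hθ hr.le
  have hweak (l : ℝ≥0∞) : l * volume.restrict (cube z r) {y | l < MVcube ρ θ g y} ≤
      5 ^ n * c * A * Ψ * volume.restrict (cube z r) Set.univ := by
    rw [Measure.restrict_apply_univ]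
    calc _ ≤ l * volume {y | l < MVcube ρ θ g y} := by gcongr; exact Measure.restrict_le_self
      _ ≤ 5 ^ n * (c * weightedVolume ρ θ z r * A) := (mul_volume_lt_MVcube_le hρ hθ g l).trans
          (by gcongr; exact lintegral_ofReal_abs_indicator_le hρ hθ f hr hx)
      _ = _ := by rw [weightedVolume]; ring
  have hpoint (y : EuclideanSpace ℝ (Fin n)) (hy : y ∈ cube z r) :
      MVcube ρ θ f y ^ δ ≤ MVcube ρ θ g y ^ δ + (c * A) ^ δ :=
    (ENNReal.rpow_le_rpow (MVcube_le_MVcube_indicator_add hρ hθ f hr hx hy) hδ₀.le).trans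
      (ENNReal.rpow_add_le_add_rpow _ _ hδ₀.le hδ₁)
  have hΨδ : Ψ ^ δ ≤ Ψ := by simpa using ENNReal.rpow_le_rpow_of_exponent_le hΨ hδ₁
  calc ∫⁻ y in cube z r, MVcube ρ θ f y ^ δ
      ≤ ∫⁻ y in cube z r, (MVcube ρ θ g y ^ δ + (c * A) ^ δ) :=
        setLIntegral_mono' (measurableSet_cube z r) hpoint
    _ = (∫⁻ y in cube z r, MVcube ρ θ g y ^ δ) + (c * A) ^ δ * volume (cube z r) := by
        rw [lintegral_add_right _ measurable_const, setLIntegral_const]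
    _ ≤ kolmogorovConst δ * (5 ^ n * c * A * Ψ) ^ δ * volume (cube z r) +
          (c * A) ^ δ * (Ψ * volume (cube z r)) := by
        gcongr
        · simpa using lintegral_rpow_le_of_mul_measure_lt_le hδ₀ (by finiteness) hweak
        · exact le_mul_of_one_le_left' hΨ
    _ ≤ kolmogorovConst δ * ((5 ^ n * c) ^ δ * A ^ δ * Ψ) * volume (cube z r) +
          c ^ δ * A ^ δ * (Ψ * volume (cube z r)) := by
        simp only [ENNReal.mul_rpow_of_nonneg _ _ hδ₀.le]
        gcongr
    _ = _ := by rw [weightedVolume, a1Const]; ring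

lemma inv_weightedVolume_mul_setLIntegral_MVcube_rpow_le {ρ : EuclideanSpace ℝ (Fin n) → ℝ}
    (hρ : ∀ x, 0 < ρ x) {θ δ : ℝ} (hθ : 0 ≤ θ) (hδ₀ : 0 < δ) (hδ₁ : δ ≤ 1)
    (f : EuclideanSpace ℝ (Fin n) → ℝ) {z x : EuclideanSpace ℝ (Fin n)} {r : ℝ} (hr : 0 < r)
    (hx : x ∈ cube z r) :
    (weightedVolume ρ θ z r)⁻¹ * ∫⁻ y in cube z r, MVcube ρ θ f y ^ δ ≤
      a1Const n θ δ * MVcube ρ θ f x ^ δ := by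
  rcases eq_or_ne (MVcube ρ θ f x) ⊤ with hA | hA
  · rw [hA, ENNReal.top_rpow_of_pos hδ₀, mul_top (by unfold a1Const; positivity)]
    exact le_top
  rw [← ENNReal.div_eq_inv_mul, ENNReal.div_le_iff (weightedVolume_ne_zero z hρ hθ hr)
    (weightedVolume_ne_top z)]
  exact setLIntegral_MVcube_rpow_le hρ hθ hδ₀ hδ₁ f hr hx hA

end Cubes

theorem stmt7_general {n : ℕ} (ρ : EuclideanSpace ℝ (Fin n) → ℝ) (hρ : ∀ x, 0 < ρ x)
    (θ δ : ℝ) (hθ : 0 < θ) (hδ₀ : 0 < δ) (hδ₁ : δ < 1)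
    (f : EuclideanSpace ℝ (Fin n) → ℝ) :
    ∃ C : ℝ≥0∞, C ≠ ⊤ ∧
      ∀ (z : EuclideanSpace ℝ (Fin n)) (r : ℝ), 0 < r →
        ∀ᵐ x ∂(volume.restrict (cube z r)),
          (ENNReal.ofReal ((1 + r / ρ z) ^ θ) * volume (cube z r))⁻¹ *
              (∫⁻ y in cube z r, (MVcube ρ θ f y) ^ δ)
            ≤ C * (MVcube ρ θ f x) ^ δ := by
  refine ⟨a1Const n θ δ, a1Const_ne_top hδ₀.le hδ₁, fun z r hr => ?_⟩
  filter_upwards [ae_restrict_mem (measurableSet_cube z r)] with x hx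
  exact inv_weightedVolume_mul_setLIntegral_MVcube_rpow_le hρ hθ.le hδ₀ hδ₁.le f hr hx

/-- if `M_{V,θ} f` is finite a.e. and `0 < δ < 1`, then `(M_{V,θ} f)^δ`
is an `A_1^{ρ,θ}` weight. -/
theorem stmt7 {n : ℕ} (ρ : EuclideanSpace ℝ (Fin n) → ℝ) (hρ : ∀ x, 0 < ρ x)
    (θ δ : ℝ) (hθ : 0 < θ) (hδ₀ : 0 < δ) (hδ₁ : δ < 1)
    (f : EuclideanSpace ℝ (Fin n) → ℝ) (hf : LocallyIntegrable f volume)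
    (hfin : ∀ᵐ x, MVcube ρ θ f x < ⊤) :
    ∃ C : ℝ≥0∞, C ≠ ⊤ ∧
      ∀ (z : EuclideanSpace ℝ (Fin n)) (r : ℝ), 0 < r →
        ∀ᵐ x ∂(volume.restrict (cube z r)),
          (ENNReal.ofReal ((1 + r / ρ z) ^ θ) * volume (cube z r))⁻¹ *
              (∫⁻ y in cube z r, (MVcube ρ θ f y) ^ δ)
            ≤ C * (MVcube ρ θ f x) ^ δ :=
  stmt7_general ρ hρ θ δ hθ hδ₀ hδ₁ f
end
end
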